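/- Let P and P_θ be measures on a measurable space such that P_θ has density p_θ = {θ·λ}^δ · e^{-∫ θ dΛ} · q with respect to a common dominating measure, and P has density p = λ^δ · e^{-∫ dΛ} · q, where θ > 0 and all factors are nonnegative. Then whenever p = 0 we have p_θ = 0; hence P_θ is absolutely continuous with respect to P, and the Radon–Nikodym derivative equals θ^δ · e^{-∫ (θ - 1) dΛ} on the set {p > 0}. -/

import Mathlib

open MeasureTheory

/-- Absolute continuity of the incremental-intervention likelihood without positivity.
With observed-data density `p = λ^δ · e^{-a} · q` (where `a = ∫ dΛ`) and intervened density
`p_θ = (θ·λ)^δ · e^{-b} · q` (where `b = ∫ θ dΛ`), with `θ > 0` and all factors nonnegative: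
whenever `p = 0` we have `p_θ = 0`; hence `P_θ ≪ P`, and the Radon–Nikodym derivative equals
`θ^δ · e^{-(∫(θ-1)dΛ)} = θ^δ · e^{-(b - a)}` on the set `{p > 0}`. -/
theorem stmt_5 {Ω : Type*} [MeasurableSpace Ω] (μ : Measure Ω)
    (δ : Ω → ℕ) (lam a b q θf p pθ : Ω → ℝ)
    (hδ : ∀ x, δ x = 0 ∨ δ x = 1)
    (hlam : ∀ x, 0 ≤ lam x) (hq : ∀ x, 0 ≤ q x)
    (ha : ∀ x, 0 ≤ a x) (hb : ∀ x, 0 ≤ b x)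
    (hθ : ∀ x, 0 < θf x)
    (hp : ∀ x, p x = lam x ^ δ x * Real.exp (-(a x)) * q x)
    (hpθ : ∀ x, pθ x = (θf x * lam x) ^ δ x * Real.exp (-(b x)) * q x)
    (hpm : Measurable p) (hpθm : Measurable pθ) :
    (∀ x, p x = 0 → pθ x = 0) ∧
    (μ.withDensity (fun x => ENNReal.ofReal (pθ x))
        ≪ μ.withDensity (fun x => ENNReal.ofReal (p x))) ∧
    (∀ x, 0 < p x → pθ x = (θf x ^ δ x * Real.exp (-(b x - a x))) * p x) := by
  have key : ∀ x, pθ x = (θf x ^ δ x * Real.exp (-(b x - a x))) * p x := by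
    intro x
    have he : Real.exp (-(b x - a x)) * Real.exp (-(a x)) = Real.exp (-(b x)) := by
      rw [← Real.exp_add]; ring_nf
    rw [hp, hpθ, mul_pow, ← he]; ring
  have h1 : ∀ x, p x = 0 → pθ x = 0 := fun x h => by rw [key x, h, mul_zero]
  refine ⟨h1, ?_, fun x _ => key x⟩
  have heq : (fun x => ENNReal.ofReal (pθ x))
      = (fun x => ENNReal.ofReal (p x)) * fun x =>
        ENNReal.ofReal (pθ x) / ENNReal.ofReal (p x) := by
    funext x
    by_cases h : p x = 0
    · simp [h, h1 x h]
    · have hp0 : 0 < p x := lt_of_le_of_ne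
        (by rw [hp]; exact mul_nonneg (mul_nonneg (pow_nonneg (hlam x) _) (Real.exp_pos _).le) (hq x)) (Ne.symm h)
      simp only [Pi.mul_apply]
      rw [ENNReal.mul_div_cancel (by simp [hp0.not_ge, ENNReal.ofReal_eq_zero])
        ENNReal.ofReal_ne_top]
  rw [heq, withDensity_mul _ (hpm.ennreal_ofReal) (show Measurable (fun x => ENNReal.ofReal (pθ x) / ENNReal.ofReal (p x)) from hpθm.ennreal_ofReal.div hpm.ennreal_ofReal)]
  exact withDensity_absolutelyContinuous _ _
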